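/- arXiv:2105.07456 — 2 statements merged into one kernel-verified Lean document; each statement's English description precedes it below -/
import Mathlib

section
/- Let s ≥ 2, H ≥ 1, k ≥ 1 be integers and let (m₁,…,m_k), (p₁,…,p_k) be tuples of naturals with positive sums and r(m₁,…,m_k) ≠ r(p₁,…,p_k) (as tuples of rationals), where r normalizes by the sum. If kH/(s−1) < max_i |r(p)ᵢ − r(m)ᵢ|, and n₁,…,n_k satisfy (s−1)mᵢ ≤ nᵢ ≤ (s−1)mᵢ + H for all i with T = Σnᵢ, then (n₁/T, …, n_k/T) ≠ r(p₁,…,p_k). -/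
/-! Summing `(s−1)mᵢ ≤ nᵢ ≤ (s−1)mᵢ + H` gives `(s−1)M ≤ T ≤ (s−1)M + kH` for `M = Σ mᵢ`,
`T = Σ nᵢ`, and cross-multiplying then shows `|nᵢ/T − mᵢ/M| ≤ kH/T ≤ kH/(s−1)` for every `i`.
So `(nᵢ/T)ᵢ` lies within `kH/(s−1)` of `r(m)` in sup-norm, while `r(p)` lies farther away. -/

section

variable {α : Type*} [Field α] [LinearOrder α] [IsStrictOrderedRing α]

theorem abs_div_sub_div_le_of_affine_bounds {c m n M T H K : α} (hM : 0 < M) (hT : 0 < T)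
    (hm : 0 ≤ m) (hmM : m ≤ M) (hn : c * m ≤ n) (hn' : n ≤ c * m + H)
    (hTM : c * M ≤ T) (hTM' : T ≤ c * M + K) (hHK : H ≤ K) :
    |n / T - m / M| ≤ K / T := by
  rw [div_sub_div _ _ hT.ne' hM.ne', abs_div, abs_of_pos (mul_pos hT hM),
    ← mul_div_mul_right K T hM.ne']
  refine div_le_div_of_nonneg_right ?_ (mul_pos hT hM).le
  have hK : 0 ≤ K := by linarith
  rw [abs_le]
  constructor
  · nlinarith [mul_le_mul_of_nonneg_right hTM' hm, mul_le_mul_of_nonneg_right hn hM.le,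
      mul_le_mul_of_nonneg_left hmM hK]
  · nlinarith [mul_le_mul_of_nonneg_right hn' hM.le, mul_le_mul_of_nonneg_right hTM hm,
      mul_le_mul_of_nonneg_right hHK hM.le]

end

theorem abs_div_sum_sub_div_sum_le {ι : Type*} [Fintype ι] {c H : ℕ} (hc : 0 < c)
    {m n : ι → ℕ} (hm : ∑ j, m j ≠ 0) (hlow : ∀ i, c * m i ≤ n i)
    (hup : ∀ i, n i ≤ c * m i + H) (i : ι) :
    |(n i : ℚ) / (∑ j, n j : ℕ) - (m i : ℚ) / (∑ j, m j : ℕ)| ≤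
      (Fintype.card ι * H : ℕ) / c := by
  set M := ∑ j, m j
  set T := ∑ j, n j
  have hTM : c * M ≤ T := by
    rw [Finset.mul_sum]
    exact Finset.sum_le_sum fun j _ => hlow j
  have hTM' : T ≤ c * M + Fintype.card ι * H := by
    calc T ≤ ∑ j, (c * m j + H) := Finset.sum_le_sum fun j _ => hup j
      _ = c * M + Fintype.card ι * H := by
        rw [Finset.sum_add_distrib, ← Finset.mul_sum, Finset.sum_const, Finset.card_univ,
          smul_eq_mul]
  have hcT : c ≤ T := le_trans (Nat.le_mul_of_pos_right c (Nat.pos_of_ne_zero hm)) hTM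
  have hmM : m i ≤ M := Finset.single_le_sum (fun j _ => Nat.zero_le (m j)) (Finset.mem_univ i)
  have hcQ : (0 : ℚ) < c := by exact_mod_cast hc
  have hTQ : (0 : ℚ) < T := by exact_mod_cast hc.trans_le hcT
  calc _ ≤ ((Fintype.card ι * H : ℕ) : ℚ) / T := by
        apply abs_div_sub_div_le_of_affine_bounds (c := (c : ℚ)) (H := (H : ℚ))
          (by exact_mod_cast Nat.pos_of_ne_zero hm) hTQ (Nat.cast_nonneg _)
        · exact_mod_cast hmM
        · exact_mod_cast hlow i
        · exact_mod_cast hup i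
        · exact_mod_cast hTM
        · exact_mod_cast hTM'
        · exact_mod_cast Nat.le_mul_of_pos_left H (Fintype.card_pos_iff.2 ⟨i⟩)
    _ ≤ _ := div_le_div_of_nonneg_left (Nat.cast_nonneg _) hcQ (by exact_mod_cast hcT)

theorem stmt5_general {k : ℕ} [NeZero k] (s H : ℕ) (hs : 2 ≤ s)
    (m p n : Fin k → ℕ) (hm : ∑ i, m i ≠ 0)
    (hsep : (k : ℚ) * (H : ℚ) / ((s : ℚ) - 1) <
      Finset.univ.sup' Finset.univ_nonempty
        (fun i => |(p i : ℚ) / ((∑ j, p j : ℕ) : ℚ) - (m i : ℚ) / ((∑ j, m j : ℕ) : ℚ)|))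
    (hbound : ∀ i, (s - 1) * m i ≤ n i ∧ n i ≤ (s - 1) * m i + H) :
    (fun i => (n i : ℚ) / ((∑ j, n j : ℕ) : ℚ)) ≠
      (fun i => (p i : ℚ) / ((∑ j, p j : ℕ) : ℚ)) := by
  intro heq
  obtain ⟨i, -, hi⟩ := (Finset.lt_sup'_iff _).1 hsep
  rw [← congrFun heq i] at hi
  have hclose := abs_div_sum_sub_div_sum_le (by omega) hm (fun i => (hbound i).1)
    (fun i => (hbound i).2) i
  rw [Fintype.card_fin, Nat.cast_mul, Nat.cast_pred (by omega)] at hclose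
  exact hclose.not_gt hi

/-- If `kH/(s−1)` is smaller than the sup-distance between the repartitions `r(p)` and
`r(m)`, and `(s−1)mᵢ ≤ nᵢ ≤ (s−1)mᵢ + H` for all `i`, then the normalized frequency
vector `(nᵢ/T)ᵢ` differs from `r(p)`. -/
theorem stmt5 {k : ℕ} [NeZero k] (s H : ℕ) (hs : 2 ≤ s) (hH : 1 ≤ H)
    (m p n : Fin k → ℕ) (hm : ∑ i, m i ≠ 0) (hp : ∑ i, p i ≠ 0)
    (hrne : (fun i => (m i : ℚ) / ((∑ j, m j : ℕ) : ℚ)) ≠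
      (fun i => (p i : ℚ) / ((∑ j, p j : ℕ) : ℚ)))
    (hsep : (k : ℚ) * (H : ℚ) / ((s : ℚ) - 1) <
      Finset.univ.sup' Finset.univ_nonempty
        (fun i => |(p i : ℚ) / ((∑ j, p j : ℕ) : ℚ) - (m i : ℚ) / ((∑ j, m j : ℕ) : ℚ)|))
    (hbound : ∀ i, (s - 1) * m i ≤ n i ∧ n i ≤ (s - 1) * m i + H) :
    (fun i => (n i : ℚ) / ((∑ j, n j : ℕ) : ℚ)) ≠
      (fun i => (p i : ℚ) / ((∑ j, p j : ℕ) : ℚ)) :=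
  stmt5_general s H hs m p n hm hsep hbound
end

section
/- With the same hypotheses, if an atom α of 𝒜 is disjoint from top(ℬ), then g(α) = φ(α). -/
/-!
Every point of `α` outside the top level of `ℬ` lies in a non-top level `B i j ⊆ α`, which `g`
moves to `B i (j + 1) ⊆ φ(α)`; so `g(α) ⊆ φ(α)`. Both sets have the measure of `α` for every
`μ ∈ K`, and `φ(α) \ g(α)` is open, so it is `μ`-null and hence empty because `μ` is full.
-/

open MeasureTheory Set TopologicalSpace

section MeasureRigidity

variable {X : Type*} [TopologicalSpace X] [MeasurableSpace X] {μ : Measure X}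

theorem IsClosed.eq_of_subset_of_measure_ge [OpensMeasurableSpace X] [μ.IsOpenPosMeasure]
    {s t : Set X} (hs : IsClosed s) (ht : IsOpen t) (hst : s ⊆ t) (hμ : μ t ≤ μ s)
    (hμt : μ t ≠ ⊤) : s = t := by
  have hnull : μ (t \ s) = 0 :=
    (ae_eq_set.mp (ae_eq_of_subset_of_measure_ge hst hμ hs.nullMeasurableSet hμt)).2
  exact hst.antisymm (sdiff_eq_empty.mp ((ht.sdiff hs).eq_empty_of_measure_zero hnull))

theorem Homeomorph.measure_image_of_map_eq [BorelSpace X] (g : X ≃ₜ X) (hg : μ.map g = μ)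
    (s : Set X) : μ (g '' s) = μ s := by
  rw [← (MeasurePreserving.mk g.measurable hg).measure_preimage_emb g.measurableEmbedding,
    g.preimage_image]

end MeasureRigidity

theorem image_subset_image_of_disjoint_top {X ι I : Type*} {α : ι → Set X} {nh : I → ℕ}
    {B : I → ℕ → Set X} {φ g : X → X} (hαdisj : Pairwise (Function.onFun Disjoint α))
    (hBcover : (⋃ i, ⋃ j ≤ nh i, B i j) = univ) (hrefines : ∀ i, ∀ j ≤ nh i, ∃ a, B i j ⊆ α a)
    (hrespects : ∀ i, ∀ j < nh i, ∀ a, B i j ⊆ α a → B i (j + 1) ⊆ φ '' α a)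
    (hcompat : ∀ i, ∀ j < nh i, g '' B i j ⊆ B i (j + 1)) {a : ι}
    (ha : Disjoint (α a) (⋃ i, B i (nh i))) : g '' α a ⊆ φ '' α a := by
  rintro _ ⟨x, hxa, rfl⟩
  obtain ⟨i, j, hj, hxB⟩ : ∃ i j, j ≤ nh i ∧ x ∈ B i j := by
    have hx : x ∈ ⋃ i, ⋃ j ≤ nh i, B i j := hBcover ▸ mem_univ x
    simpa only [mem_iUnion, exists_prop] using hx
  have hj_lt : j < nh i := by
    refine hj.lt_of_ne ?_
    rintro rfl
    exact ha.ne_of_mem hxa (mem_iUnion_of_mem i hxB) rfl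
  obtain ⟨a', hBa'⟩ := hrefines i j hj
  obtain rfl : a' = a := by
    by_contra hne
    exact (hαdisj hne).ne_of_mem (hBa' hxB) hxa rfl
  exact hrespects i j hj_lt a' hBa' (hcompat i j hj_lt (mem_image_of_mem g hxB))

theorem stmt9_general {X : Type*} [TopologicalSpace X] [MeasurableSpace X] [BorelSpace X]
    (K : Set (Measure X)) (hKne : K.Nonempty) (hprob : ∀ μ ∈ K, IsProbabilityMeasure μ)
    (hfull : ∀ μ ∈ K, ∀ U : Set X, IsOpen U → U.Nonempty → 0 < μ U)
    (φ g : X ≃ₜ X) (hφK : ∀ μ ∈ K, Measure.map φ μ = μ) (hgK : ∀ μ ∈ K, Measure.map g μ = μ)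
    -- the clopen partition 𝒜
    {ι : Type*} (α : ι → Set X)
    (hαclopen : ∀ a, IsClopen (α a)) (hαdisj : Pairwise (Function.onFun Disjoint α))
    -- the K-partition ℬ
    {I : Type*} (nh : I → ℕ) (B : I → ℕ → Set X)
    (hBcover : (⋃ i, ⋃ j ≤ nh i, B i j) = Set.univ)
    -- ℬ refines 𝒜
    (hrefines : ∀ i, ∀ j ≤ nh i, ∃ a, B i j ⊆ α a)
    -- ℬ respects φ
    (hrespects : ∀ i, ∀ j < nh i, ∀ a, B i j ⊆ α a → B i (j + 1) ⊆ φ '' α a)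
    -- g is compatible with ℬ
    (hcompat : ∀ i, ∀ j < nh i, g '' B i j = B i (j + 1)) :
    ∀ a, Disjoint (α a) (⋃ i, B i (nh i)) → g '' α a = φ '' α a := by
  intro a ha
  obtain ⟨μ, hμ⟩ := hKne
  have := hprob μ hμ
  have : μ.IsOpenPosMeasure := ⟨fun U hU hne ↦ (hfull μ hμ U hU hne).ne'⟩
  have hsub : g '' α a ⊆ φ '' α a := image_subset_image_of_disjoint_top hαdisj hBcover
    hrefines hrespects (fun i j hj ↦ (hcompat i j hj).subset) ha
  refine IsClosed.eq_of_subset_of_measure_ge (g.isClosed_image.2 (hαclopen a).isClosed)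
    (φ.isOpen_image.2 (hαclopen a).isOpen) hsub ?_ (measure_ne_top μ _)
  rw [φ.measure_image_of_map_eq (hφK μ hμ), g.measure_image_of_map_eq (hgK μ hμ)]

/-- If `ℬ = (B i j)` is a `K`-partition refining the clopen partition `𝒜 = (α a)` and
respecting `φ`, and `g` is compatible with `ℬ`, then for every atom `α a` of `𝒜`,
`g(α a \ top ℬ) = φ(α a) \ base ℬ`. -/
theorem stmt9 {X : Type*} [TopologicalSpace X] [CompactSpace X] [MetrizableSpace X]
    [TotallyDisconnectedSpace X] [PerfectSpace X] [MeasurableSpace X] [BorelSpace X]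
    (K : Set (Measure X)) (hKne : K.Nonempty) (hprob : ∀ μ ∈ K, IsProbabilityMeasure μ)
    (hfull : ∀ μ ∈ K, ∀ U : Set X, IsOpen U → U.Nonempty → 0 < μ U)
    (φ g : X ≃ₜ X) (hφK : ∀ μ ∈ K, Measure.map φ μ = μ) (hgK : ∀ μ ∈ K, Measure.map g μ = μ)
    -- the clopen partition 𝒜
    {ι : Type*} [Fintype ι] (α : ι → Set X)
    (hαclopen : ∀ a, IsClopen (α a)) (hαdisj : Pairwise (Function.onFun Disjoint α))
    (hαcover : ⋃ a, α a = Set.univ)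
    -- the K-partition ℬ
    {I : Type*} [Fintype I] (nh : I → ℕ) (B : I → ℕ → Set X)
    (hBclopen : ∀ i, ∀ j ≤ nh i, IsClopen (B i j))
    (hBdisj : ∀ i j i' j', j ≤ nh i → j' ≤ nh i' → (i, j) ≠ (i', j') →
      Disjoint (B i j) (B i' j'))
    (hBcover : (⋃ i, ⋃ j ≤ nh i, B i j) = Set.univ)
    (hKpart : ∀ μ ∈ K, ∀ i, ∀ j ≤ nh i, ∀ l ≤ nh i, μ (B i j) = μ (B i l))
    -- ℬ refines 𝒜
    (hrefines : ∀ i, ∀ j ≤ nh i, ∃ a, B i j ⊆ α a)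
    -- ℬ respects φ
    (hrespects : ∀ i, ∀ j < nh i, ∀ a, B i j ⊆ α a → B i (j + 1) ⊆ φ '' α a)
    -- g is compatible with ℬ
    (hcompat : ∀ i, ∀ j < nh i, g '' B i j = B i (j + 1)) :
    ∀ a, Disjoint (α a) (⋃ i, B i (nh i)) → g '' α a = φ '' α a :=
  stmt9_general K hKne hprob hfull φ g hφK hgK α hαclopen hαdisj nh B hBcover hrefines hrespects
    hcompat
end
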